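/- arXiv:1404.0780 — 6 statements merged into one kernel-verified Lean document; each statement's English description precedes it below -/
import Mathlib

section
/- In every finite rooted tree equipped with a ranking satisfying the ranking rule, every vertex v has at least 2^(rank(v)) − 1 descendants (where v counts as a descendant of itself). -/
/-- The children of `v` in the rooted tree given by `parent` with root `s`:
the vertices `u ≠ s` with `parent u = v`. -/
def children {V : Type*} [Fintype V] [DecidableEq V] (parent : V → V) (s v : V) :
    Finset V :=
  Finset.univ.filter (fun u => u ≠ s ∧ parent u = v)

/-- `rank` satisfies the ranking rule with respect to the rooted tree given by
`parent` with root `s`: every leaf has rank `1`, and for every non-leaf `v`,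
letting `r` be the maximum rank of the children of `v`, `rank v = r` if exactly
one child of `v` has rank `r`, and `rank v = r + 1` if at least two children of
`v` have rank `r`. -/
def IsRanking {V : Type*} [Fintype V] [DecidableEq V] (parent : V → V) (s : V)
    (rank : V → ℕ) : Prop :=
  (∀ v, children parent s v = ∅ → rank v = 1) ∧
  (∀ v, children parent s v ≠ ∅ →
    ((((children parent s v).filter
        (fun u => rank u = (children parent s v).sup rank)).card = 1 →
      rank v = (children parent s v).sup rank) ∧
    (2 ≤ ((children parent s v).filter
        (fun u => rank u = (children parent s v).sup rank)).card →
      rank v = (children parent s v).sup rank + 1)))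

/-- In every finite rooted tree equipped with a ranking satisfying the ranking
rule, every vertex `v` has at least `2 ^ rank v - 1` descendants (where `v`
counts as a descendant of itself). -/
theorem rooted_tree_rank_descendants {V : Type*} [Fintype V] [DecidableEq V]
    (parent : V → V) (s : V) (rank : V → ℕ)
    (hroot : parent s = s)
    (hreach : ∀ v : V, ∃ n : ℕ, parent^[n] v = s)
    (hrank : IsRanking parent s rank) :
    ∀ v : V, 2 ^ rank v - 1 ≤ {u : V | ∃ n : ℕ, parent^[n] u = v}.ncard := by
  classical
  set D : V → Finset V :=
    fun v => Finset.univ.filter (fun u => ∃ n : ℕ, parent^[n] u = v) with hD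
  have hDcard : ∀ v, {u : V | ∃ n : ℕ, parent^[n] u = v}.ncard = (D v).card := by
    intro v
    rw [Set.ncard_eq_toFinset_card']
    congr 1
    ext u
    simp [hD]
  have hmemD : ∀ u v, u ∈ D v ↔ ∃ n : ℕ, parent^[n] u = v := by
    intro u v; simp [hD]
  have hsfix : ∀ n, parent^[n] s = s := fun n => Function.iterate_fixed hroot n
  have hper : ∀ v k, 0 < k → parent^[k] v = v → v = s := by
    intro v k hk hvk
    obtain ⟨m, hm⟩ := hreach v
    have hcyc : ∀ t, parent^[k * t] v = v := by
      intro t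
      induction t with
      | zero => simp
      | succ t ih => rw [Nat.mul_succ, Function.iterate_add_apply, hvk, ih]
    have h1 : parent^[k * m] v = v := hcyc m
    have h2 : parent^[k * m] v = s := by
      have hle : m ≤ k * m := Nat.le_mul_of_pos_left m hk
      have heq : k * m = (k * m - m) + m := by omega
      rw [heq, Function.iterate_add_apply, hm, hsfix]
    rw [h1] at h2
    exact h2
  have hself : ∀ v, v ∈ D v := by
    intro v; rw [hmemD]; exact ⟨0, rfl⟩
  have hsub : ∀ u v, parent u = v → D u ⊆ D v := by
    intro u v hpu w hw
    rw [hmemD] at hw ⊢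
    obtain ⟨n, hn⟩ := hw
    exact ⟨n + 1, by rw [Function.iterate_succ_apply', hn, hpu]⟩
  have hnotmem : ∀ u v, u ≠ s → parent u = v → v ∉ D u := by
    intro u v hu hpu hv
    rw [hmemD] at hv
    obtain ⟨n, hn⟩ := hv
    have hcyc : parent^[n + 1] v = v := by
      rw [Function.iterate_succ_apply', hn, hpu]
    have hvs := hper v (n + 1) (Nat.succ_pos n) hcyc
    rw [hvs, hsfix] at hn
    exact hu hn.symm
  have hkey : ∀ v u u', u ≠ s → u' ≠ s → parent u = v → parent u' = v →
      ∀ w n m, n ≤ m → parent^[n] w = u → parent^[m] w = u' → u = u' := by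
    intro v u u' hu hu' hpu hpu' w n m hnm hn hmw
    have hmn : parent^[m - n] u = u' := by
      rw [← hn, ← Function.iterate_add_apply, Nat.sub_add_cancel hnm, hmw]
    rcases Nat.eq_zero_or_pos (m - n) with h0 | hpos
    · rw [h0] at hmn; simpa using hmn
    · exfalso
      set k := m - n with hkdef
      have hk1 : k - 1 + 1 = k := by omega
      have h1 : parent^[k - 1] v = u' := by
        rw [← hpu, ← Function.iterate_succ_apply, Nat.succ_eq_add_one, hk1]
        exact hmn
      have h2 : parent^[k] v = v := by
        rw [← hk1, Function.iterate_succ_apply', h1, hpu']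
      have hvs := hper v k hpos h2
      rw [hvs, hsfix] at h1
      exact hu' h1.symm
  have hdisj : ∀ v u u', u ∈ children parent s v → u' ∈ children parent s v →
      u ≠ u' → Disjoint (D u) (D u') := by
    intro v u u' hu hu' huu'
    simp only [children, Finset.mem_filter, Finset.mem_univ, true_and] at hu hu'
    rw [Finset.disjoint_left]
    intro w hw hw'
    rw [hmemD] at hw hw'
    obtain ⟨n, hn⟩ := hw
    obtain ⟨m, hm⟩ := hw'
    rcases le_total n m with hnm | hmn
    · exact huu' (hkey v u u' hu.1 hu'.1 hu.2 hu'.2 w n m hnm hn hm)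
    · exact huu' ((hkey v u' u hu'.1 hu.1 hu'.2 hu.2 w m n hmn hm hn).symm)
  have hchild : ∀ v u, u ∈ children parent s v → u ≠ s ∧ parent u = v := by
    intro v u hu
    simpa [children] using hu
  have main : ∀ N : ℕ, ∀ v : V, (D v).card ≤ N → 2 ^ rank v - 1 ≤ (D v).card := by
    intro N
    induction N with
    | zero =>
      intro v hv
      have := Finset.card_pos.mpr ⟨v, hself v⟩
      omega
    | succ N ih =>
      intro v hv
      by_cases hne : children parent s v = ∅
      · rw [hrank.1 v hne]
        have := Finset.card_pos.mpr ⟨v, hself v⟩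
        omega
      · set C := children parent s v with hC
        set r := C.sup rank with hr
        have hCne : C.Nonempty := Finset.nonempty_iff_ne_empty.mpr hne
        obtain ⟨c, hcC, hcr⟩ := Finset.exists_mem_eq_sup C hCne rank
        have hcmem : c ∈ C.filter (fun u => rank u = C.sup rank) := by
          rw [Finset.mem_filter]
          exact ⟨hcC, hcr.symm⟩
        have hfpos : 1 ≤ (C.filter (fun u => rank u = C.sup rank)).card :=
          Finset.card_pos.mpr ⟨c, hcmem⟩
        -- bound for a single child
        have hbound : ∀ u, u ∈ C → (D u).card + 1 ≤ (D v).card ∧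
            2 ^ rank u - 1 ≤ (D u).card := by
          intro u huC
          obtain ⟨hus, hpu⟩ := hchild v u huC
          have hsubv : insert v (D u) ⊆ D v := by
            intro w hw
            rcases Finset.mem_insert.mp hw with h | h
            · rw [h]; exact hself v
            · exact hsub u v hpu h
          have hvnot : v ∉ D u := hnotmem u v hus hpu
          have hcard : (D u).card + 1 ≤ (D v).card := by
            have := Finset.card_le_card hsubv
            rw [Finset.card_insert_of_notMem hvnot] at this
            omega
          exact ⟨hcard, ih u (by omega)⟩
        have hpow : 1 ≤ 2 ^ r := Nat.one_le_two_pow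
        rcases Nat.lt_or_ge (C.filter (fun u => rank u = C.sup rank)).card 2 with h1 | h2
        · -- exactly one child of max rank
          have hcard1 : (C.filter (fun u => rank u = C.sup rank)).card = 1 := by omega
          have hrv : rank v = r := (hrank.2 v hne).1 hcard1
          obtain ⟨hc1, hc2⟩ := hbound c hcC
          rw [hrv, hr]
          rw [← hcr] at hc2
          omega
        · -- at least two children of max rank
          have hrv : rank v = r + 1 := (hrank.2 v hne).2 h2
          obtain ⟨c1, hc1m, c2, hc2m, hc12⟩ := Finset.one_lt_card.mp h2
          rw [Finset.mem_filter] at hc1m hc2m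
          have hd := hdisj v c1 c2 hc1m.1 hc2m.1 hc12
          obtain ⟨hb1, hb1'⟩ := hbound c1 hc1m.1
          obtain ⟨hb2, hb2'⟩ := hbound c2 hc2m.1
          have hsubv : insert v (D c1 ∪ D c2) ⊆ D v := by
            intro w hw
            rcases Finset.mem_insert.mp hw with h | h
            · rw [h]; exact hself v
            · rcases Finset.mem_union.mp h with h | h
              · exact hsub c1 v (hchild v c1 hc1m.1).2 h
              · exact hsub c2 v (hchild v c2 hc2m.1).2 h
          have hvnot : v ∉ D c1 ∪ D c2 := by
            rw [Finset.mem_union]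
            push_neg
            exact ⟨hnotmem c1 v (hchild v c1 hc1m.1).1 (hchild v c1 hc1m.1).2,
              hnotmem c2 v (hchild v c2 hc2m.1).1 (hchild v c2 hc2m.1).2⟩
          have hcard : (D c1).card + (D c2).card + 1 ≤ (D v).card := by
            have hle := Finset.card_le_card hsubv
            rw [Finset.card_insert_of_notMem hvnot,
              Finset.card_union_of_disjoint hd] at hle
            omega
          rw [hrv, hr]
          have hps : 2 ^ (C.sup rank + 1) = 2 ^ C.sup rank * 2 := pow_succ 2 (C.sup rank)
          rw [hc1m.2] at hb1'
          rw [hc2m.2] at hb2'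
          have hpow' : 1 ≤ 2 ^ C.sup rank := Nat.one_le_two_pow
          omega
  intro v
  rw [hDcard]
  exact main (D v).card v le_rfl
end

section
/- In every finite rooted tree on n ≥ 2 vertices equipped with a ranking satisfying the ranking rule, every vertex has rank at most ⌈log₂ n⌉. -/
open scoped Classical in
/-- Descendants of `v` (including `v` itself). -/
noncomputable def desc {V : Type*} [Fintype V] (parent : V → V) (v : V) : Finset V :=
  Finset.univ.filter (fun u => ∃ n, parent^[n] u = v)

lemma mem_desc {V : Type*} [Fintype V] {parent : V → V} {v u : V} :
    u ∈ desc parent v ↔ ∃ n, parent^[n] u = v := by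
  classical
  simp [desc]

lemma mem_children {V : Type*} [Fintype V] [DecidableEq V] {parent : V → V} {s v u : V} :
    u ∈ children parent s v ↔ u ≠ s ∧ parent u = v := by
  simp [children]

lemma key_count {V : Type*} [Fintype V] [DecidableEq V]
    (parent : V → V) (s : V) (rank : V → ℕ)
    (hroot : parent s = s)
    (hreach : ∀ v : V, ∃ n : ℕ, parent^[n] v = s)
    (hrank : IsRanking parent s rank) :
    ∀ v : V, 2 ^ rank v ≤ (desc parent v).card + 1 := by
  classical
  set d : V → ℕ := fun v => Nat.find (hreach v) with hd
  have hds : ∀ v, parent^[d v] v = s := fun v => Nat.find_spec (hreach v)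
  have hdmin : ∀ v n, parent^[n] v = s → d v ≤ n := fun v n h => Nat.find_le h
  have hs_iter : ∀ n, parent^[n] s = s := by
    intro n; induction n with
    | zero => rfl
    | succ n ih => rw [Function.iterate_succ_apply, hroot, ih]
  have hd_s : d s = 0 := Nat.le_zero.mp (hdmin s 0 rfl)
  have hd_parent : ∀ v, v ≠ s → d (parent v) = d v - 1 ∧ 1 ≤ d v := by
    intro v hv
    have h1 : 1 ≤ d v := by
      rcases Nat.eq_zero_or_pos (d v) with h | h
      · exact absurd (by simpa [h] using hds v) hv
      · exact h
    have h2 : parent^[d v - 1] (parent v) = s := by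
      have := hds v
      rwa [← Nat.sub_add_cancel h1, Function.iterate_succ_apply] at this
    have h3 : d (parent v) ≤ d v - 1 := hdmin _ _ h2
    have h4 : d v ≤ d (parent v) + 1 := by
      apply hdmin
      rw [Function.iterate_succ_apply]
      exact hds (parent v)
    exact ⟨by omega, h1⟩
  -- iterate beyond depth is s
  have h_iter_ge : ∀ v n, d v ≤ n → parent^[n] v = s := by
    intro v n hn
    have : parent^[n] v = parent^[n - d v] (parent^[d v] v) := by
      rw [← Function.iterate_add_apply]
      congr 1
      omega
    rw [this, hds, hs_iter]
  -- exact depth decrease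
  have hd_iter : ∀ n v, n ≤ d v → d (parent^[n] v) = d v - n := by
    intro n
    induction n with
    | zero => intro v _; simp
    | succ n ih =>
      intro v hn
      have hw : d (parent^[n] v) = d v - n := ih v (by omega)
      have hwn : parent^[n] v ≠ s := by
        intro h
        rw [h, hd_s] at hw
        omega
      have := hd_parent (parent^[n] v) hwn
      rw [Function.iterate_succ_apply', this.1, hw]
      omega
  -- ancestor facts
  have hanc : ∀ x y : V, (∃ n, parent^[n] x = y) → d y ≤ d x ∧ (d y = d x → x = y) := by
    intro x y ⟨n, hn⟩
    rcases le_or_gt n (d x) with h | h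
    · have := hd_iter n x h
      rw [hn] at this
      constructor
      · omega
      · intro he
        have : n = 0 := by omega
        rw [this] at hn
        simpa using hn
    · have hys : y = s := by rw [← hn, h_iter_ge x n (by omega)]
      subst hys
      constructor
      · omega
      · intro he
        have hx0 : d x = 0 := by omega
        have := hds x
        rw [hx0] at this
        exact this
  -- depth of a child
  have hd_child : ∀ v u, u ∈ children parent s v → d u = d v + 1 := by
    intro v u hu
    rw [mem_children] at hu
    have := hd_parent u hu.1
    rw [hu.2] at this
    omega
  -- depth bound
  have hd_lt : ∀ v, d v < Fintype.card V := by
    intro v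
    have key2 : ∀ i j : ℕ, i < j → j ≤ d v → parent^[i] v = parent^[j] v → False := by
      intro i j hij hj he
      have h : parent^[d v - j + i] v = s := by
        rw [Function.iterate_add_apply, he, ← Function.iterate_add_apply]
        have : d v - j + j = d v := by omega
        rw [this, hds]
      have := hdmin v _ h
      omega
    have hinj : Function.Injective (fun i : Fin (d v + 1) => parent^[(i : ℕ)] v) := by
      intro i j hij
      simp only at hij
      apply Fin.ext
      by_contra hne
      rcases Nat.lt_or_ge (i : ℕ) (j : ℕ) with h | h
      · exact key2 _ _ h (by omega) hij
      · exact key2 _ _ (by omega) (by omega) hij.symm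
    have := Fintype.card_le_of_injective _ hinj
    simp at this
    omega
  -- desc facts
  have hself : ∀ v, v ∈ desc parent v := fun v => mem_desc.mpr ⟨0, rfl⟩
  have hsub : ∀ v u, u ∈ children parent s v → desc parent u ⊆ desc parent v := by
    intro v u hu w hw
    rcases mem_desc.mp hw with ⟨n, hn⟩
    refine mem_desc.mpr ⟨n + 1, ?_⟩
    rw [Function.iterate_succ_apply', hn, (mem_children.mp hu).2]
  have hnotmem : ∀ v u, u ∈ children parent s v → v ∉ desc parent u := by
    intro v u hu hv
    rcases mem_desc.mp hv with ⟨n, hn⟩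
    have := (hanc v u ⟨n, hn⟩).1
    have := hd_child v u hu
    omega
  have hdisj : ∀ v u₁ u₂, u₁ ∈ children parent s v → u₂ ∈ children parent s v →
      u₁ ≠ u₂ → Disjoint (desc parent u₁) (desc parent u₂) := by
    intro v u₁ u₂ h1 h2 hne
    rw [Finset.disjoint_left]
    intro w hw1 hw2
    rcases mem_desc.mp hw1 with ⟨a, ha⟩
    rcases mem_desc.mp hw2 with ⟨b, hb⟩
    have hdu : d u₁ = d u₂ := by rw [hd_child v u₁ h1, hd_child v u₂ h2]
    rcases le_total a b with h | h
    · have : parent^[b - a] u₁ = u₂ := by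
        rw [← ha, ← Function.iterate_add_apply]
        have : b - a + a = b := by omega
        rw [this, hb]
      exact hne ((hanc u₁ u₂ ⟨_, this⟩).2 hdu.symm)
    · have : parent^[a - b] u₂ = u₁ := by
        rw [← hb, ← Function.iterate_add_apply]
        have : a - b + b = a := by omega
        rw [this, ha]
      exact hne ((hanc u₂ u₁ ⟨_, this⟩).2 hdu).symm
  -- main induction
  have main : ∀ N v, Fintype.card V ≤ d v + N → 2 ^ rank v ≤ (desc parent v).card + 1 := by
    intro N
    induction N with
    | zero => intro v hv; exact absurd (hd_lt v) (by omega)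
    | succ N ih =>
      intro v hv
      by_cases hC : children parent s v = ∅
      · rw [hrank.1 v hC]
        have : 1 ≤ (desc parent v).card := Finset.card_pos.mpr ⟨v, hself v⟩
        omega
      · set C := children parent s v with hCdef
        set r := C.sup rank with hr
        have hCne : C.Nonempty := Finset.nonempty_iff_ne_empty.mpr hC
        obtain ⟨u₀, hu₀C, hu₀r⟩ := Finset.exists_mem_eq_sup C hCne rank
        have hF : u₀ ∈ C.filter (fun u => rank u = r) := by
          rw [Finset.mem_filter]; exact ⟨hu₀C, hu₀r.symm⟩
        have hFpos : 1 ≤ (C.filter (fun u => rank u = r)).card :=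
          Finset.card_pos.mpr ⟨u₀, hF⟩
        have ihchild : ∀ u, u ∈ C → 2 ^ rank u ≤ (desc parent u).card + 1 := by
          intro u hu
          apply ih
          rw [hd_child v u hu] at *
          omega
        rcases eq_or_lt_of_le hFpos with h1 | h2
        · -- exactly one child of maximal rank
          have hrv : rank v = r := (hrank.2 v hC).1 h1.symm
          have hub : 2 ^ r ≤ (desc parent u₀).card + 1 := by
            rw [hr, hu₀r]; exact ihchild u₀ hu₀C
          have hins : insert v (desc parent u₀) ⊆ desc parent v := by
            intro w hw
            rcases Finset.mem_insert.mp hw with h | h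
            · rw [h]; exact hself v
            · exact hsub v u₀ hu₀C h
          have hcard : (desc parent u₀).card + 1 ≤ (desc parent v).card := by
            have := Finset.card_le_card hins
            rwa [Finset.card_insert_of_notMem (hnotmem v u₀ hu₀C)] at this
          rw [hrv]
          omega
        · -- at least two children of maximal rank
          have hrv : rank v = r + 1 := (hrank.2 v hC).2 h2
          obtain ⟨u₁, hu₁, u₂, hu₂, hne⟩ :=
            Finset.one_lt_card.mp h2
          rw [Finset.mem_filter] at hu₁ hu₂
          have h1b : 2 ^ r ≤ (desc parent u₁).card + 1 := by
            rw [← hu₁.2]; exact ihchild u₁ hu₁.1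
          have h2b : 2 ^ r ≤ (desc parent u₂).card + 1 := by
            rw [← hu₂.2]; exact ihchild u₂ hu₂.1
          have hdj := hdisj v u₁ u₂ hu₁.1 hu₂.1 hne
          have hins : insert v (desc parent u₁ ∪ desc parent u₂) ⊆ desc parent v := by
            intro w hw
            rcases Finset.mem_insert.mp hw with h | h
            · rw [h]; exact hself v
            · rcases Finset.mem_union.mp h with h | h
              · exact hsub v u₁ hu₁.1 h
              · exact hsub v u₂ hu₂.1 h
          have hvnot : v ∉ desc parent u₁ ∪ desc parent u₂ := by
            rw [Finset.mem_union]
            push_neg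
            exact ⟨hnotmem v u₁ hu₁.1, hnotmem v u₂ hu₂.1⟩
          have hcard : (desc parent u₁).card + (desc parent u₂).card + 1
              ≤ (desc parent v).card := by
            have := Finset.card_le_card hins
            rwa [Finset.card_insert_of_notMem hvnot,
              Finset.card_union_of_disjoint hdj] at this
          have hpow : 2 ^ (r + 1) = 2 ^ r + 2 ^ r := by ring
          rw [hrv]
          omega
  intro v
  exact main (Fintype.card V) v (by have := hd_lt v; omega)

/-- In every finite rooted tree on `n ≥ 2` vertices equipped with a ranking
satisfying the ranking rule, every vertex has rank at most `⌈log₂ n⌉`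
(the least `m` with `2 ^ m ≥ n`, i.e. `Nat.clog 2 n`). -/
theorem rooted_tree_rank_le_clog {V : Type*} [Fintype V] [DecidableEq V]
    (parent : V → V) (s : V) (rank : V → ℕ)
    (hn : 2 ≤ Fintype.card V)
    (hroot : parent s = s)
    (hreach : ∀ v : V, ∃ n : ℕ, parent^[n] v = s)
    (hrank : IsRanking parent s rank) :
    ∀ v : V, rank v ≤ Nat.clog 2 (Fintype.card V) := by
  intro v
  by_contra hcon
  push_neg at hcon
  have hkey := key_count parent s rank hroot hreach hrank v
  have hle : (desc parent v).card ≤ Fintype.card V := Finset.card_le_univ _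
  have h1 : Fintype.card V ≤ 2 ^ Nat.clog 2 (Fintype.card V) :=
    Nat.le_pow_clog one_lt_two _
  have h2 : 2 ^ (Nat.clog 2 (Fintype.card V) + 1) ≤ 2 ^ rank v :=
    Nat.pow_le_pow_right (by norm_num) (by omega)
  have h3 : 2 ^ (Nat.clog 2 (Fintype.card V) + 1)
      = 2 ^ Nat.clog 2 (Fintype.card V) + 2 ^ Nat.clog 2 (Fintype.card V) := by ring
  omega
end

section
/- In every finite rooted tree on n ≥ 2 vertices equipped with a ranking satisfying the ranking rule, every vertex u ∈ V is reachable from the root s by a directed path in the virtual digraph G′ of length at most 2⌈log₂ n⌉. (This is the paper's Lemma: in the virtual graph G′, the virtual-distance d_u from s satisfies d_u ≤ 2⌈log₂ n⌉ for every node u.) -/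
/-- `v` is the head of a fast stretch: it is the root or its rank differs from
its parent's rank. -/
def FastHead {V : Type*} (parent : V → V) (s : V) (rank : V → ℕ) (v : V) : Prop :=
  v = s ∨ rank (parent v) ≠ rank v

/-- The edge relation of the virtual digraph `G'`: a directed edge from `v` to
`u` whenever `parent u = v` (a tree edge), and a fast directed edge from `v` to
`u` whenever `v` is the head of a fast stretch, `u ≠ v` is a descendant of `v`,
and every vertex on the tree path from `u` up to `v` has rank equal to
`rank v`. -/
def VEdge {V : Type*} (parent : V → V) (s : V) (rank : V → ℕ) (v u : V) : Prop :=
  parent u = v ∨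
  (FastHead parent s rank v ∧ u ≠ v ∧
    ∃ n : ℕ, parent^[n] u = v ∧ ∀ i ≤ n, rank (parent^[i] u) = rank v)

namespace VirtualAux

set_option linter.unusedSectionVars false
variable {V : Type*} [Fintype V] [DecidableEq V]

lemma iter_fixed {parent : V → V} {s : V} (hroot : parent s = s) (n : ℕ) :
    parent^[n] s = s := by
  induction n with
  | zero => rfl
  | succ n ih => rw [Function.iterate_succ_apply', ih, hroot]

lemma no_cycle {parent : V → V} {s : V} (hroot : parent s = s)
    (hreach : ∀ v : V, ∃ n : ℕ, parent^[n] v = s)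
    {a b : V} {k j : ℕ} (h1 : parent^[k] a = b) (h2 : parent^[j] b = a) :
    a = b := by
  rcases Nat.eq_zero_or_pos (j + k) with h0 | hpos
  · have : k = 0 := by omega
    subst this; exact h1
  · have hcyc : parent^[j + k] a = a := by
      rw [Function.iterate_add_apply, h1, h2]
    have hrep : ∀ m : ℕ, parent^[m * (j + k)] a = a := by
      intro m
      induction m with
      | zero => simp
      | succ m ih =>
        rw [Nat.succ_mul, Function.iterate_add_apply, hcyc, ih]
    obtain ⟨N, hN⟩ := hreach a
    have hge : N ≤ N * (j + k) := Nat.le_mul_of_pos_right N hpos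
    have has : a = s := by
      have h3 : parent^[N * (j + k) - N + N] a = a := by
        rw [Nat.sub_add_cancel hge]; exact hrep N
      rw [Function.iterate_add_apply, hN, iter_fixed hroot] at h3
      exact h3.symm
    have hbs : b = s := by rw [← h1, has, iter_fixed hroot]
    rw [has, hbs]

open scoped Classical in
noncomputable def Desc (parent : V → V) (v : V) : Finset V :=
  Finset.univ.filter (fun u => ∃ k : ℕ, parent^[k] u = v)

lemma mem_Desc {parent : V → V} {v u : V} :
    u ∈ Desc parent v ↔ ∃ k : ℕ, parent^[k] u = v := by
  classical
  simp [Desc]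

lemma self_mem_Desc {parent : V → V} (v : V) : v ∈ Desc parent v :=
  mem_Desc.mpr ⟨0, rfl⟩

lemma mem_children {parent : V → V} {s v u : V} :
    u ∈ children parent s v ↔ u ≠ s ∧ parent u = v := by
  simp [children]

lemma Desc_child_subset {parent : V → V} {v c : V} (hc : parent c = v) :
    Desc parent c ⊆ Desc parent v := by
  intro u hu
  obtain ⟨k, hk⟩ := mem_Desc.mp hu
  exact mem_Desc.mpr ⟨k + 1, by rw [Function.iterate_succ_apply', hk, hc]⟩

lemma root_not_mem_Desc_child {parent : V → V} {s v c : V} (hroot : parent s = s)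
    (hreach : ∀ v : V, ∃ n : ℕ, parent^[n] v = s)
    (hc : c ∈ children parent s v) : v ∉ Desc parent c := by
  obtain ⟨hcs, hcv⟩ := mem_children.mp hc
  intro hv
  obtain ⟨k, hk⟩ := mem_Desc.mp hv
  have : v = c := no_cycle hroot hreach hk (j := 1) (by simpa using hcv)
  have hcc : parent c = c := this ▸ hcv
  obtain ⟨n, hn⟩ := hreach c
  rw [iter_fixed hcc n] at hn
  exact hcs hn

lemma Desc_child_card_lt {parent : V → V} {s v c : V} (hroot : parent s = s)
    (hreach : ∀ v : V, ∃ n : ℕ, parent^[n] v = s)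
    (hc : c ∈ children parent s v) :
    (Desc parent c).card < (Desc parent v).card := by
  apply Finset.card_lt_card
  constructor
  · exact Desc_child_subset (mem_children.mp hc).2
  · intro hsub
    exact root_not_mem_Desc_child hroot hreach hc (hsub (self_mem_Desc v))

lemma Desc_children_disjoint {parent : V → V} {s v c₁ c₂ : V}
    (hroot : parent s = s) (hreach : ∀ v : V, ∃ n : ℕ, parent^[n] v = s)
    (hc₁ : c₁ ∈ children parent s v) (hc₂ : c₂ ∈ children parent s v)
    (hne : c₁ ≠ c₂) : Disjoint (Desc parent c₁) (Desc parent c₂) := by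
  rw [Finset.disjoint_left]
  intro u hu₁ hu₂
  obtain ⟨k₁, hk₁⟩ := mem_Desc.mp hu₁
  obtain ⟨k₂, hk₂⟩ := mem_Desc.mp hu₂
  clear hu₁ hu₂
  wlog hle : k₁ ≤ k₂ generalizing c₁ c₂ k₁ k₂
  · exact this hc₂ hc₁ hne.symm k₂ hk₂ k₁ hk₁ (by omega)
  rcases Nat.eq_or_lt_of_le hle with heq | hlt
  · exact hne (by rw [← hk₁, heq, hk₂])
  · have h3 : parent^[k₂ - k₁] c₁ = c₂ := by
      rw [← hk₁, ← Function.iterate_add_apply, Nat.sub_add_cancel hle, hk₂]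
    have h4 : parent^[k₂ - k₁ - 1] v = c₂ := by
      rw [show k₂ - k₁ = (k₂ - k₁ - 1) + 1 from by omega,
        Function.iterate_succ_apply, (mem_children.mp hc₁).2] at h3
      exact h3
    have h5 : c₂ = v :=
      no_cycle hroot hreach (k := 1) (by simpa using (mem_children.mp hc₂).2) h4
    exact root_not_mem_Desc_child hroot hreach hc₂
      (h5 ▸ self_mem_Desc c₂)

lemma filter_sup_nonempty {parent : V → V} {s : V} (rank : V → ℕ) {v : V}
    (h : children parent s v ≠ ∅) :
    ((children parent s v).filter
      (fun u => rank u = (children parent s v).sup rank)).Nonempty := by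
  obtain ⟨c, hc, hsup⟩ :=
    Finset.exists_mem_eq_sup _ (Finset.nonempty_iff_ne_empty.mpr h) rank
  exact ⟨c, Finset.mem_filter.mpr ⟨hc, hsup.symm⟩⟩

lemma sup_le_rank {parent : V → V} {s : V} {rank : V → ℕ}
    (hrank : IsRanking parent s rank) {v : V} (h : children parent s v ≠ ∅) :
    (children parent s v).sup rank ≤ rank v := by
  have hpos := Finset.card_pos.mpr (filter_sup_nonempty rank h)
  rcases Nat.eq_or_lt_of_le hpos with h1 | h2
  · rw [(hrank.2 v h).1 h1.symm]
  · rw [(hrank.2 v h).2 h2]; omega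

lemma rank_le_parent {parent : V → V} {s : V} {rank : V → ℕ}
    (hrank : IsRanking parent s rank) {u : V} (hu : u ≠ s) :
    rank u ≤ rank (parent u) := by
  have hmem : u ∈ children parent s (parent u) := mem_children.mpr ⟨hu, rfl⟩
  exact le_trans (Finset.le_sup hmem)
    (sup_le_rank hrank (Finset.ne_empty_of_mem hmem))

lemma rank_pos {parent : V → V} {s : V} {rank : V → ℕ}
    (hroot : parent s = s) (hreach : ∀ v : V, ∃ n : ℕ, parent^[n] v = s)
    (hrank : IsRanking parent s rank) (v : V) : 1 ≤ rank v := by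
  have key : ∀ n : ℕ, ∀ v : V, (Desc parent v).card ≤ n → 1 ≤ rank v := by
    intro n
    induction n with
    | zero =>
      intro v hv
      have := Finset.card_pos.mpr ⟨v, self_mem_Desc (parent := parent) v⟩
      omega
    | succ n ih =>
      intro v hv
      by_cases hch : children parent s v = ∅
      · rw [hrank.1 v hch]
      · obtain ⟨c, hc⟩ := Finset.nonempty_iff_ne_empty.mpr hch
        have h1 : rank c ≤ rank v :=
          le_trans (Finset.le_sup hc) (sup_le_rank hrank hch)
        have h2 := Desc_child_card_lt hroot hreach hc
        exact le_trans (ih c (by omega)) h1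
  exact key _ v le_rfl

lemma pow_rank_le {parent : V → V} {s : V} {rank : V → ℕ}
    (hroot : parent s = s) (hreach : ∀ v : V, ∃ n : ℕ, parent^[n] v = s)
    (hrank : IsRanking parent s rank) (v : V) :
    2 ^ rank v ≤ (Desc parent v).card + 1 := by
  have key : ∀ n : ℕ, ∀ v : V, (Desc parent v).card ≤ n →
      2 ^ rank v ≤ (Desc parent v).card + 1 := by
    intro n
    induction n with
    | zero =>
      intro v hv
      have := Finset.card_pos.mpr ⟨v, self_mem_Desc (parent := parent) v⟩
      omega
    | succ n ih =>
      intro v hv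
      by_cases hch : children parent s v = ∅
      · rw [hrank.1 v hch]
        have := Finset.card_pos.mpr ⟨v, self_mem_Desc (parent := parent) v⟩
        omega
      · have hpos := Finset.card_pos.mpr (filter_sup_nonempty rank hch)
        rcases Nat.eq_or_lt_of_le hpos with h1 | h2
        · -- exactly one child of max rank
          obtain ⟨c, hcf⟩ := filter_sup_nonempty rank hch
          obtain ⟨hc, hcr⟩ := Finset.mem_filter.mp hcf
          have hrv : rank v = (children parent s v).sup rank :=
            (hrank.2 v hch).1 h1.symm
          have hlt := Desc_child_card_lt hroot hreach hc
          have := ih c (by omega)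
          rw [hrv, ← hcr]
          omega
        · -- at least two children of max rank
          have hrv : rank v = (children parent s v).sup rank + 1 :=
            (hrank.2 v hch).2 h2
          obtain ⟨a, haf, b, hbf, hab⟩ := Finset.one_lt_card.mp h2
          obtain ⟨ha, har⟩ := Finset.mem_filter.mp haf
          obtain ⟨hb, hbr⟩ := Finset.mem_filter.mp hbf
          have hlta := Desc_child_card_lt hroot hreach ha
          have hltb := Desc_child_card_lt hroot hreach hb
          have iha := ih a (by omega)
          have ihb := ih b (by omega)
          have hdisj := Desc_children_disjoint hroot hreach ha hb hab
          have hsub : Desc parent a ∪ Desc parent b ⊆ (Desc parent v).erase v := by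
            intro u hu
            rcases Finset.mem_union.mp hu with h | h
            · refine Finset.mem_erase.mpr ⟨?_, Desc_child_subset (mem_children.mp ha).2 h⟩
              rintro rfl
              exact root_not_mem_Desc_child hroot hreach ha h
            · refine Finset.mem_erase.mpr ⟨?_, Desc_child_subset (mem_children.mp hb).2 h⟩
              rintro rfl
              exact root_not_mem_Desc_child hroot hreach hb h
          have hcard : (Desc parent a).card + (Desc parent b).card ≤
              (Desc parent v).card - 1 := by
            have h3 := Finset.card_le_card hsub
            rw [Finset.card_union_of_disjoint hdisj] at h3
            rw [Finset.card_erase_of_mem (self_mem_Desc v)] at h3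
            exact h3
          have hvpos := Finset.card_pos.mpr ⟨v, self_mem_Desc (parent := parent) v⟩
          have hab2 : rank b = rank a := hbr.trans har.symm
          rw [hab2] at ihb
          rw [hrv, ← har, pow_succ]
          have : 2 ^ rank a ≤ (Desc parent a).card + 1 := iha
          omega
  exact key _ v le_rfl

lemma rank_le_clog {parent : V → V} {s : V} {rank : V → ℕ}
    (hn : 2 ≤ Fintype.card V)
    (hroot : parent s = s) (hreach : ∀ v : V, ∃ n : ℕ, parent^[n] v = s)
    (hrank : IsRanking parent s rank) (v : V) :
    rank v ≤ Nat.clog 2 (Fintype.card V) := by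
  by_contra h
  push_neg at h
  have h1 : 2 ^ (Nat.clog 2 (Fintype.card V) + 1) ≤ 2 ^ rank v :=
    Nat.pow_le_pow_right (by norm_num) h
  have h2 := Nat.le_pow_clog (b := 2) (by norm_num) (Fintype.card V)
  have h3 := pow_rank_le hroot hreach hrank v
  have h4 : (Desc parent v).card ≤ Fintype.card V := Finset.card_le_univ _
  rw [pow_succ] at h1
  omega

def IsPath {V : Type*} (E : V → V → Prop) (s u : V) (m : ℕ) : Prop :=
  ∃ f : ℕ → V, f 0 = s ∧ f m = u ∧ ∀ i < m, E (f i) (f (i + 1))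

lemma isPath_nil {V : Type*} (E : V → V → Prop) (s : V) : IsPath E s s 0 :=
  ⟨fun _ => s, rfl, rfl, fun i hi => absurd hi (by omega)⟩

lemma IsPath.snoc {V : Type*} {E : V → V → Prop} {s v u : V} {m : ℕ}
    (h : IsPath E s v m) (he : E v u) : IsPath E s u (m + 1) := by
  obtain ⟨f, h0, hm, hE⟩ := h
  refine ⟨fun i => if i ≤ m then f i else u, ?_, ?_, ?_⟩
  · simp only [Nat.zero_le, if_pos]; exact h0
  · simp
  · intro i hi
    rcases Nat.lt_or_ge i m with h1 | h1
    · simp only [if_pos (Nat.le_of_lt h1), if_pos (Nat.succ_le_of_lt h1)]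
      exact hE i h1
    · have : i = m := by omega
      subst this
      simp only [le_refl, if_pos, if_neg (by omega : ¬ i + 1 ≤ i)]
      rw [hm]
      exact he

section Main

variable {parent : V → V} {s : V} {rank : V → ℕ}
variable (hroot : parent s = s) (hreach : ∀ v : V, ∃ n : ℕ, parent^[n] v = s)
include hroot hreach

lemma dep_parent_lt (hu : u ≠ s) :
    Nat.find (hreach (parent u)) < Nat.find (hreach u) := by
  have hspec := Nat.find_spec (hreach u)
  have hpos : 0 < Nat.find (hreach u) := by
    rcases Nat.eq_zero_or_pos (Nat.find (hreach u)) with h | h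
    · rw [h] at hspec; exact absurd hspec hu
    · exact h
  have : parent^[Nat.find (hreach u) - 1] (parent u) = s := by
    rw [← Function.iterate_succ_apply, Nat.succ_eq_add_one,
      Nat.sub_add_cancel hpos]
    exact hspec
  have := Nat.find_min' (hreach (parent u)) this
  omega

lemma dep_iterate_le (u : V) (k : ℕ) :
    Nat.find (hreach (parent^[k] u)) ≤ Nat.find (hreach u) := by
  apply Nat.find_min'
  rw [← Function.iterate_add_apply, Nat.add_comm, Function.iterate_add_apply,
    Nat.find_spec (hreach u), iter_fixed hroot]

lemma stretch_head (u : V) :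
    ∃ (h : V) (k : ℕ), parent^[k] u = h ∧ FastHead parent s rank h ∧
      Nat.find (hreach h) ≤ Nat.find (hreach u) ∧
      ∀ i ≤ k, rank (parent^[i] u) = rank u := by
  have key : ∀ d : ℕ, ∀ u : V, Nat.find (hreach u) ≤ d →
      ∃ (h : V) (k : ℕ), parent^[k] u = h ∧ FastHead parent s rank h ∧
        Nat.find (hreach h) ≤ Nat.find (hreach u) ∧
        ∀ i ≤ k, rank (parent^[i] u) = rank u := by
    intro d
    induction d with
    | zero =>
      intro u hd
      have hspec := Nat.find_spec (hreach u)
      have h0 : Nat.find (hreach u) = 0 := by omega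
      rw [h0] at hspec
      refine ⟨u, 0, rfl, Or.inl hspec, le_rfl, ?_⟩
      intro i hi
      have : i = 0 := by omega
      subst this; rfl
    | succ n ih =>
      intro u hd
      by_cases hh : FastHead parent s rank u
      · refine ⟨u, 0, rfl, hh, le_rfl, ?_⟩
        intro i hi
        have : i = 0 := by omega
        subst this; rfl
      · rw [FastHead, not_or, not_not] at hh
        obtain ⟨hus, hpr⟩ := hh
        have hlt := dep_parent_lt hroot hreach hus
        obtain ⟨h, k, hk, hhead, hdep, hranks⟩ := ih (parent u) (by omega)
        refine ⟨h, k + 1, by rw [Function.iterate_succ_apply]; exact hk,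
          hhead, by omega, ?_⟩
        intro i hi
        match i with
        | 0 => rfl
        | j + 1 =>
          rw [Function.iterate_succ_apply]
          rw [hranks j (by omega), hpr]
  exact key _ u le_rfl

lemma head_path (hrank : IsRanking parent s rank) (u : V)
    (hu : FastHead parent s rank u) :
    ∃ m : ℕ, IsPath (VEdge parent s rank) s u m ∧
      m + 2 * rank u ≤ 2 * rank s := by
  have key : ∀ d : ℕ, ∀ u : V, Nat.find (hreach u) ≤ d →
      FastHead parent s rank u →
      ∃ m : ℕ, IsPath (VEdge parent s rank) s u m ∧
        m + 2 * rank u ≤ 2 * rank s := by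
    intro d
    induction d with
    | zero =>
      intro u hd _
      have hspec := Nat.find_spec (hreach u)
      have h0 : Nat.find (hreach u) = 0 := by omega
      rw [h0] at hspec
      have hus : u = s := hspec
      subst hus
      exact ⟨0, isPath_nil _ _, by omega⟩
    | succ n ih =>
      intro u hd hu
      by_cases hus : u = s
      · subst hus
        exact ⟨0, isPath_nil _ _, by omega⟩
      · have hru : rank u < rank (parent u) := by
          have h1 := rank_le_parent hrank hus
          have h2 : rank (parent u) ≠ rank u := hu.resolve_left hus
          omega
        obtain ⟨h, k, hk, hhead, hdep, hranks⟩ := stretch_head hroot hreach (parent u)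
        have hdp := dep_parent_lt hroot hreach hus
        obtain ⟨m₀, hpath, hbound⟩ := ih h (by omega) hhead
        have hrh : rank h = rank (parent u) := by
          have := hranks k le_rfl
          rw [hk] at this
          exact this
        by_cases hph : parent u = h
        · exact ⟨m₀ + 1, hpath.snoc (Or.inl hph), by omega⟩
        · refine ⟨m₀ + 2, (hpath.snoc ?_).snoc (Or.inl rfl), by omega⟩
          exact Or.inr ⟨hhead, hph, k, hk, fun i hi => (hranks i hi).trans hrh.symm⟩
  exact key _ u le_rfl hu

lemma any_path (hrank : IsRanking parent s rank) (u : V) :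
    ∃ m : ℕ, IsPath (VEdge parent s rank) s u m ∧
      m + 2 * rank u ≤ 2 * rank s + 1 := by
  obtain ⟨h, k, hk, hhead, hdep, hranks⟩ := stretch_head hroot hreach u
  obtain ⟨m₀, hpath, hbound⟩ := head_path hroot hreach hrank h hhead
  have hrh : rank h = rank u := by
    have := hranks k le_rfl
    rw [hk] at this
    exact this
  by_cases huh : u = h
  · subst huh
    exact ⟨m₀, hpath, by omega⟩
  · refine ⟨m₀ + 1, hpath.snoc ?_, by omega⟩
    exact Or.inr ⟨hhead, huh, k, hk, fun i hi => by rw [hranks i hi, hrh]⟩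

end Main

end VirtualAux


/-- In every finite rooted tree on `n ≥ 2` vertices equipped with a ranking
satisfying the ranking rule, every vertex `u` is reachable from the root `s`
by a directed path in the virtual digraph `G'` of length at most
`2⌈log₂ n⌉ = 2 * Nat.clog 2 n`; i.e., the virtual-distance `d_u` from `s`
satisfies `d_u ≤ 2⌈log₂ n⌉` for every node `u`. -/
theorem virtual_distance_le {V : Type*} [Fintype V] [DecidableEq V]
    (parent : V → V) (s : V) (rank : V → ℕ)
    (hn : 2 ≤ Fintype.card V)
    (hroot : parent s = s)
    (hreach : ∀ v : V, ∃ n : ℕ, parent^[n] v = s)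
    (hrank : IsRanking parent s rank) :
    ∀ u : V, ∃ (m : ℕ) (f : ℕ → V),
      m ≤ 2 * Nat.clog 2 (Fintype.card V) ∧
      f 0 = s ∧ f m = u ∧
      ∀ i < m, VEdge parent s rank (f i) (f (i + 1)) := by
  intro u
  obtain ⟨m, ⟨f, h0, hm, hE⟩, hb⟩ := VirtualAux.any_path hroot hreach hrank u
  refine ⟨m, f, ?_, h0, hm, hE⟩
  have h1 := VirtualAux.rank_pos hroot hreach hrank u
  have h2 := VirtualAux.rank_le_clog hn hroot hreach hrank s
  omega
end

section
/- Let x ≥ 1 be an integer and let p be a real number with 1/(2x) ≤ p ≤ 1/x. Consider x independent Boolean random variables, each equal to true with probability p (i.e., the product of x Bernoulli(p) distributions on functions Fin x → Bool). Then the probability that exactly one of the x variables is true is at least 1/8. -/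
open MeasureTheory

lemma aux_real (x : ℕ) (hx : 1 ≤ x) : (1/4 : ℝ) ≤ (1 - 1/x)^(x-1) := by
  obtain ⟨m, rfl⟩ : ∃ m, x = m + 1 := ⟨x - 1, (Nat.succ_pred_eq_of_pos hx).symm⟩
  rcases Nat.eq_zero_or_pos m with rfl | hm
  · norm_num
  have hm' : (0:ℝ) < m := by exact_mod_cast hm
  have h1 : (1 - 1/((m:ℝ)+1)) = ((1 + 1/(m:ℝ))⁻¹) := by
    field_simp
    ring
  have h2 : (1 + 1/(m:ℝ))^m ≤ 4 := by
    have := Real.add_one_le_exp (1/(m:ℝ))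
    calc (1 + 1/(m:ℝ))^m ≤ (Real.exp (1/m))^m := by
          apply pow_le_pow_left₀ (by positivity) (by linarith)
      _ = Real.exp 1 := by
          rw [← Real.exp_nat_mul]; congr 1; field_simp
      _ ≤ 4 := by linarith [Real.exp_one_lt_d9]
  have hpos : (0:ℝ) < (1 + 1/(m:ℝ))^m := by positivity
  rw [Nat.add_sub_cancel]
  push_cast
  rw [h1, inv_pow, show (1:ℝ)/4 = 4⁻¹ by norm_num]
  exact inv_anti₀ hpos h2

/-- Let `x ≥ 1` and let `p ∈ [1/(2x), 1/x]`. Consider `x` independent Boolean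
random variables, each equal to `true` with probability `p` (the product of
`x` Bernoulli(`p`) distributions on `Fin x → Bool`). Then the probability that
exactly one of the `x` variables is `true` is at least `1/8`. -/
theorem exactly_one_true_prob_ge_eighth (x : ℕ) (hx : 1 ≤ x) (p : ENNReal)
    (hp₁ : 1 / (2 * (x : ENNReal)) ≤ p) (hp₂ : p ≤ 1 / (x : ENNReal)) (hp : p ≤ 1) :
    (1 : ENNReal) / 8 ≤
      Measure.pi (fun _ : Fin x => (PMF.bernoulli p.toNNReal (by simpa using ENNReal.toNNReal_mono ENNReal.one_ne_top hp)).toMeasure)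
        {f : Fin x → Bool | ∃! j : Fin x, f j = true} := by
  set μ := Measure.pi (fun _ : Fin x => (PMF.bernoulli p.toNNReal (by simpa using ENNReal.toNNReal_mono ENNReal.one_ne_top hp)).toMeasure) with hμ
  set e : Fin x → (Fin x → Bool) := fun j i => decide (i = j) with he
  -- event equals union of singletons
  have hset : {f : Fin x → Bool | ∃! j : Fin x, f j = true} = ⋃ j, {e j} := by
    ext f
    simp only [Set.mem_setOf_eq, Set.mem_iUnion, Set.mem_singleton_iff]
    constructor
    · rintro ⟨j, hj, huniq⟩
      refine ⟨j, funext fun i => ?_⟩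
      by_cases hij : i = j
      · subst hij; simp [he, hj]
      · have : f i ≠ true := fun h => hij (huniq i h)
        simp [he, hij, Bool.not_eq_true] at *
        exact this
    · rintro ⟨j, rfl⟩
      exact ⟨j, by simp [he], fun i hi => by simpa [he] using hi⟩
  have hinj : Function.Injective e := by
    intro a b hab
    have := congrFun hab a
    simp [he] at this
    exact this
  -- measure of each singleton
  have hsingle : ∀ j, μ {e j} = p * (1 - p) ^ (x - 1) := by
    intro j
    have : ({e j} : Set (Fin x → Bool)) = Set.pi Set.univ (fun i => {e j i}) := by
      ext f; simp [Set.pi, funext_iff]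
    rw [this, hμ, Measure.pi_pi]
    have hb : ∀ i, (PMF.bernoulli p.toNNReal (by simpa using ENNReal.toNNReal_mono ENNReal.one_ne_top hp)).toMeasure {e j i} = if i = j then p else (1 - p) := by
      intro i
      rw [PMF.toMeasure_apply_singleton _ _ (measurableSet_singleton _)]
      by_cases hij : i = j <;> simp [he, hij, PMF.bernoulli, ENNReal.coe_toNNReal (ne_top_of_le_ne_top ENNReal.one_ne_top hp)]
    simp only [hb]
    rw [← Finset.mul_prod_erase Finset.univ _ (Finset.mem_univ j), if_pos rfl]
    congr 1
    rw [Finset.prod_congr rfl (fun i hi => if_neg (Finset.ne_of_mem_erase hi)),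
      Finset.prod_const, Finset.card_erase_of_mem (Finset.mem_univ j),
      Finset.card_univ, Fintype.card_fin]
  have hdisj : Pairwise (Function.onFun Disjoint fun j => ({e j} : Set (Fin x → Bool))) := by
    intro a b hab
    simp only [Function.onFun, Set.disjoint_singleton]
    exact fun h => hab (hinj h)
  rw [hset, measure_iUnion hdisj (fun j => measurableSet_singleton _)]
  simp only [hsingle]
  rw [tsum_fintype, Finset.sum_const, Finset.card_univ, Fintype.card_fin, nsmul_eq_mul]
  have hx0 : (x : ENNReal) ≠ 0 := by exact_mod_cast Nat.one_le_iff_ne_zero.mp hx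
  have hxtop : (x : ENNReal) ≠ ⊤ := ENNReal.natCast_ne_top x
  have h3 : (1:ENNReal)/2 ≤ (x:ENNReal) * p := by
    calc (1:ENNReal)/2 = (x:ENNReal) * (1/(2*(x:ENNReal))) := by
          rw [mul_one_div, mul_comm 2 (x:ENNReal)]
          rw [show (x:ENNReal) / ((x:ENNReal)*2) = (x:ENNReal)*1 / ((x:ENNReal)*2) by rw [mul_one]]
          rw [ENNReal.mul_div_mul_left 1 2 hx0 hxtop]
      _ ≤ (x:ENNReal) * p := mul_le_mul_right hp₁ _
  have hxR : (0:ℝ) < x := by exact_mod_cast hx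
  have h4 : (1:ENNReal)/4 ≤ (1 - p)^(x-1) := by
    have hbase : (1:ENNReal) - 1/(x:ENNReal) ≤ 1 - p := tsub_le_tsub_left hp₂ 1
    have key : (1:ENNReal)/4 ≤ ((1:ENNReal) - 1/(x:ENNReal))^(x-1) := by
      have heq : (1:ENNReal) - 1/(x:ENNReal) = ENNReal.ofReal (1 - 1/(x:ℝ)) := by
        rw [ENNReal.ofReal_sub _ (by positivity), ENNReal.ofReal_one, one_div, one_div,
          ENNReal.ofReal_inv_of_pos hxR, ENNReal.ofReal_natCast]
      have hb0 : (0:ℝ) ≤ 1 - 1/x := by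
        have h1x : (1:ℝ)/x ≤ 1 := by
          rw [div_le_one hxR]; exact_mod_cast hx
        linarith
      rw [heq, ← ENNReal.ofReal_pow hb0]
      calc (1:ENNReal)/4 = ENNReal.ofReal (1/4) := by
            rw [ENNReal.ofReal_div_of_pos (by norm_num)]; norm_num
        _ ≤ _ := ENNReal.ofReal_le_ofReal (aux_real x hx)
    exact key.trans (pow_le_pow_left' hbase _)
  calc (1:ENNReal)/8 = (1/2) * (1/4) := by
        rw [one_div, one_div, one_div, ← ENNReal.mul_inv (by norm_num) (by norm_num)]
        norm_num
    _ ≤ ((x:ENNReal) * p) * ((1-p)^(x-1)) := mul_le_mul' h3 h4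
    _ = (x:ENNReal) * (p * (1-p)^(x-1)) := by ring
end

section
/- Let G be a finite connected simple graph on vertex set V with source s ∈ V, let ℓ(v) denote the graph distance from s to v, let R ≥ 1, and let r : V → ℕ be a rank function with 1 ≤ r(v) ≤ R for all v. Say that a node u fast-transmits in round t ∈ ℕ if t ≡ 2(ℓ(u) + 3·r(u)) (mod 6R). Then for every round t, any two distinct nodes u₁ ≠ u₂ that both fast-transmit in round t and have a common neighbor w in G satisfy ℓ(u₁) = ℓ(u₂) and r(u₁) = r(u₂). -/
/-- No two fast transmissions collide at a common neighbor, part 1: let `G` be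
a finite connected simple graph with source `s`, let `ℓ(v) = dist_G(s, v)`,
let `R ≥ 1` and let `r : V → ℕ` with `1 ≤ r v ≤ R`. Node `u` fast-transmits in
round `t` iff `t ≡ 2(ℓ(u) + 3·r(u)) (mod 6R)`. Then any two distinct nodes
that both fast-transmit in round `t` and have a common neighbor have the same
level and the same rank. -/
theorem fast_transmissions_same_level_rank {V : Type*} [Fintype V]
    (G : SimpleGraph V) (hG : G.Connected) (s : V)
    (R : ℕ) (hR : 1 ≤ R) (r : V → ℕ) (hr : ∀ v, 1 ≤ r v ∧ r v ≤ R)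
    (t : ℕ) (u₁ u₂ w : V) (hne : u₁ ≠ u₂)
    (h₁ : t ≡ 2 * (G.dist s u₁ + 3 * r u₁) [MOD 6 * R])
    (h₂ : t ≡ 2 * (G.dist s u₂ + 3 * r u₂) [MOD 6 * R])
    (hw₁ : G.Adj u₁ w) (hw₂ : G.Adj u₂ w) :
    G.dist s u₁ = G.dist s u₂ ∧ r u₁ = r u₂ := by
  have hd1 : G.dist u₁ w = 1 := SimpleGraph.dist_eq_one_iff_adj.mpr hw₁
  have hd2 : G.dist w u₂ = 1 := SimpleGraph.dist_eq_one_iff_adj.mpr hw₂.symm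
  have hA : G.dist s u₂ ≤ G.dist s u₁ + 2 := by
    have := hG.dist_triangle (u := s) (v := u₁) (w := u₂)
    have h12 : G.dist u₁ u₂ ≤ 2 := by
      have := hG.dist_triangle (u := u₁) (v := w) (w := u₂)
      omega
    omega
  have hB : G.dist s u₁ ≤ G.dist s u₂ + 2 := by
    have := hG.dist_triangle (u := s) (v := u₂) (w := u₁)
    have h21 : G.dist u₂ u₁ ≤ 2 := by
      have := hG.dist_triangle (u := u₂) (v := w) (w := u₁)
      have hd1' : G.dist w u₁ = 1 := SimpleGraph.dist_eq_one_iff_adj.mpr hw₁.symm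
      have hd2' : G.dist u₂ w = 1 := SimpleGraph.dist_eq_one_iff_adj.mpr hw₂
      omega
    omega
  have hmod : 2 * (G.dist s u₁ + 3 * r u₁) ≡ 2 * (G.dist s u₂ + 3 * r u₂) [MOD 6 * R] :=
    h₁.symm.trans h₂
  have hdvd : ((6 * R : ℕ) : ℤ) ∣
      (2 * (G.dist s u₂ + 3 * r u₂) : ℕ) - (2 * (G.dist s u₁ + 3 * r u₁) : ℕ) :=
    hmod.dvd
  have hzero : ((2 * (G.dist s u₂ + 3 * r u₂) : ℕ) : ℤ)
      - ((2 * (G.dist s u₁ + 3 * r u₁) : ℕ) : ℤ) = 0 := by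
    apply Int.eq_zero_of_abs_lt_dvd hdvd
    have hr1 := hr u₁
    have hr2 := hr u₂
    rw [abs_lt]
    push_cast
    constructor <;> nlinarith [hA, hB, hr1.1, hr1.2, hr2.1, hr2.2]
  have hr1 := hr u₁
  have hr2 := hr u₂
  push_cast at hzero
  omega
end

section
/- Let G be a finite connected simple graph on vertex set V with source s ∈ V, let ℓ(v) denote the graph distance from s to v, let R ≥ 1, and let r : V → ℕ satisfy 1 ≤ r(v) ≤ R for all v. Let parent : V → V be a BFS tree of G rooted at s, and assume the collision-freeness property: for every w ∈ V, any two neighbors u₁, u₂ of w with ℓ(u₁) = ℓ(u₂) = ℓ(w) − 1 and r(u₁) = r(u₂) = r(w) are equal. Say that a node u fast-transmits in round t ∈ ℕ if t ≡ 2(ℓ(u) + 3·r(u)) (mod 6R). Then for every round t and every node w ≠ s with r(parent(w)) = r(w): if parent(w) fast-transmits in round t, then parent(w) is the only neighbor of w in G that fast-transmits in round t (so w receives the fast transmission of its parent without collision). This is the paper's lemma that there are no collisions between any two fast transmissions. -/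
/-- No collisions between fast transmissions along a GST: let `G` be a finite
connected simple graph with source `s`, levels `ℓ(v) = dist_G(s, v)`, ranks
`r : V → ℕ` with `1 ≤ r v ≤ R`, and a BFS tree `parent` rooted at `s`
satisfying the GST collision-freeness property (any two neighbors of `w` on
level `ℓ(w) − 1` with rank `r(w)` coincide). Node `u` fast-transmits in round
`t` iff `t ≡ 2(ℓ(u) + 3·r(u)) (mod 6R)`. Then for every node `w ≠ s` with
`r(parent w) = r(w)`: if `parent w` fast-transmits in round `t`, then
`parent w` is the only neighbor of `w` that fast-transmits in round `t`. -/
theorem fast_transmissions_collision_free {V : Type*} [Fintype V]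
    (G : SimpleGraph V) (hG : G.Connected) (s : V)
    (R : ℕ) (hR : 1 ≤ R) (r : V → ℕ) (hr : ∀ v, 1 ≤ r v ∧ r v ≤ R)
    (parent : V → V) (hps : parent s = s)
    (hbfs : ∀ v, v ≠ s → G.Adj (parent v) v ∧ G.dist s (parent v) + 1 = G.dist s v)
    (hcf : ∀ w u₁ u₂ : V, G.Adj u₁ w → G.Adj u₂ w →
      G.dist s u₁ + 1 = G.dist s w → G.dist s u₂ + 1 = G.dist s w →
      r u₁ = r w → r u₂ = r w → u₁ = u₂)
    (t : ℕ) (w : V) (hw : w ≠ s) (hpr : r (parent w) = r w)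
    (hpt : t ≡ 2 * (G.dist s (parent w) + 3 * r (parent w)) [MOD 6 * R]) :
    ∀ u : V, G.Adj u w → t ≡ 2 * (G.dist s u + 3 * r u) [MOD 6 * R] →
      u = parent w := by
  intro u hadj hut
  obtain ⟨hpadj, hplev⟩ := hbfs w hw
  have hd1 : G.dist u w = 1 := SimpleGraph.dist_eq_one_iff_adj.mpr hadj
  have hdwu : G.dist w u = 1 := SimpleGraph.dist_eq_one_iff_adj.mpr hadj.symm
  have ht1 : G.dist s w ≤ G.dist s u + G.dist u w := hG.dist_triangle
  have ht2 : G.dist s u ≤ G.dist s w + G.dist w u := hG.dist_triangle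
  have hmod : 2 * (G.dist s u + 3 * r u) ≡
      2 * (G.dist s (parent w) + 3 * r (parent w)) [MOD 6 * R] :=
    hut.symm.trans hpt
  have hdvd : (6 * R : ℤ) ∣
      (2 * (G.dist s u + 3 * r u) : ℤ) -
        (2 * (G.dist s (parent w) + 3 * r (parent w)) : ℤ) := by
    have := (Nat.modEq_iff_dvd (n := 6 * R)).mp hmod.symm
    push_cast at this ⊢
    convert this using 1 <;> push_cast <;> ring
  have hru := hr u
  have hrw := hr w
  have hzero : (2 * (G.dist s u + 3 * r u) : ℤ) -
      (2 * (G.dist s (parent w) + 3 * r (parent w)) : ℤ) = 0 := by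
    refine Int.eq_zero_of_abs_lt_dvd hdvd ?_
    rw [abs_lt]
    push_cast
    omega
  have hlu : G.dist s u + 1 = G.dist s w ∧ r u = r w := by
    have := hzero
    push_cast at this
    omega
  exact hcf w u (parent w) hadj hpadj hlu.1 hplev hlu.2 hpr
end
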